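/- Let v : ℝ → ℝ be six times continuously differentiable, x₀ ∈ ℝ, and suppose v′(x₀) ≠ 0. For h > 0 define the cell averages v̄_j(h), j = −2, …, 2, and the Jiang–Shu smoothness indicators β₀(h), β₁(h), β₂(h). Set d₀ = 1/10, d₁ = 3/5, d₂ = 3/10, τ₅(h) = |β₀(h) − β₂(h)|, and (with ε = 0) define the WENO-Z quantities α_s(h) = d_s(1 + τ₅(h)/β_s(h)) and ω_s(h) = α_s(h)/(α₀(h) + α₁(h) + α₂(h)). Then there exists h₀ > 0 such that β_s(h) > 0 for all 0 < h < h₀ and s = 0, 1, 2, and for each s the difference ω_s(h) − d_s is O(h³) as h → 0⁺. -/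

import Mathlib

open Filter Topology Asymptotics

/-- Cell average of `v` over the cell `[x₀+(j-1/2)h, x₀+(j+1/2)h]`. -/
noncomputable def cellAvg (v : ℝ → ℝ) (x₀ h j : ℝ) : ℝ :=
  (1 / h) * ∫ t in (x₀ + (j - 1 / 2) * h)..(x₀ + (j + 1 / 2) * h), v t

/-- The Jiang–Shu smoothness indicator `β₀`. -/
noncomputable def beta0 (v : ℝ → ℝ) (x₀ h : ℝ) : ℝ :=
  (13 / 12) * (cellAvg v x₀ h (-2) - 2 * cellAvg v x₀ h (-1) + cellAvg v x₀ h 0) ^ 2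
    + (1 / 4) * (cellAvg v x₀ h (-2) - 4 * cellAvg v x₀ h (-1) + 3 * cellAvg v x₀ h 0) ^ 2

/-- The Jiang–Shu smoothness indicator `β₁`. -/
noncomputable def beta1 (v : ℝ → ℝ) (x₀ h : ℝ) : ℝ :=
  (13 / 12) * (cellAvg v x₀ h (-1) - 2 * cellAvg v x₀ h 0 + cellAvg v x₀ h 1) ^ 2
    + (1 / 4) * (cellAvg v x₀ h (-1) - cellAvg v x₀ h 1) ^ 2

/-- The Jiang–Shu smoothness indicator `β₂`. -/
noncomputable def beta2 (v : ℝ → ℝ) (x₀ h : ℝ) : ℝ :=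
  (13 / 12) * (cellAvg v x₀ h 0 - 2 * cellAvg v x₀ h 1 + cellAvg v x₀ h 2) ^ 2
    + (1 / 4) * (3 * cellAvg v x₀ h 0 - 4 * cellAvg v x₀ h 1 + cellAvg v x₀ h 2) ^ 2

/-- The vector of Jiang–Shu smoothness indicators. -/
noncomputable def betaV (v : ℝ → ℝ) (x₀ h : ℝ) : Fin 3 → ℝ :=
  ![beta0 v x₀ h, beta1 v x₀ h, beta2 v x₀ h]

/-- The linear weights of the fifth-order WENO reconstruction at the right cell boundary. -/
noncomputable def dLin : Fin 3 → ℝ := ![1 / 10, 3 / 5, 3 / 10]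

/-- The WENO-Z global smoothness indicator `τ₅ = |β₀ − β₂|`. -/
noncomputable def tau5 (v : ℝ → ℝ) (x₀ h : ℝ) : ℝ :=
  |beta0 v x₀ h - beta2 v x₀ h|

/-!
Write each smoothness indicator as `β_s = 13/12 S_s² + 1/4 D_s²`, with `S_s`, `D_s` stencils on the
five cell averages. Replacing `v` by its Taylor polynomial shows that a stencil whose first `n`
moments vanish is `O(hⁿ)`. Hence `D_s = ±2 v'(x₀) h + o(h)`, so `h² = O(β_s)` since
`v'(x₀) ≠ 0`, while `β₀ - β₂ = 13/12 (S₀ - S₂)(S₀ + S₂) + 1/4 (D₀ - D₂)(D₀ + D₂)` is a sum of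
products of stencils of orders `3 + 2` and `1 + 4`, so `τ₅ = O(h⁵)`. Therefore
`τ₅ / β_s = O(h³)`, and `|ω_s - d_s| ≤ ∑_r τ₅ / β_r`.
-/

open Set

/-- The average of `s ^ k` over the unit cell `[j - 1/2, j + 1/2]`. -/
noncomputable def cellMoment (j : ℝ) (k : ℕ) : ℝ :=
  ((j + 1 / 2) ^ (k + 1) - (j - 1 / 2) ^ (k + 1)) / (k + 1)

lemma cellMoment_zero (j : ℝ) : cellMoment j 0 = 1 := by
  rw [cellMoment]; ring

lemma cellMoment_one (j : ℝ) : cellMoment j 1 = j := by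
  rw [cellMoment]; push_cast; ring

section CellAverage

variable {x₀ h : ℝ}

lemma cellAvg_sub {f g : ℝ → ℝ} (hf : Continuous f) (hg : Continuous g) (j : ℝ) :
    cellAvg (fun t => f t - g t) x₀ h j = cellAvg f x₀ h j - cellAvg g x₀ h j := by
  simp only [cellAvg, intervalIntegral.integral_sub (hf.intervalIntegrable _ _)
    (hg.intervalIntegrable _ _), mul_sub]

lemma cellAvg_finsetSum_mul {ι : Type*} (s : Finset ι) (c : ι → ℝ) {f : ι → ℝ → ℝ}
    (hf : ∀ i, Continuous (f i)) (j : ℝ) :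
    cellAvg (fun t => ∑ i ∈ s, c i * f i t) x₀ h j = ∑ i ∈ s, c i * cellAvg (f i) x₀ h j := by
  simp only [cellAvg, intervalIntegral.integral_finsetSum fun i _ =>
    ((hf i).const_mul (c i)).intervalIntegrable _ _, intervalIntegral.integral_const_mul,
    Finset.mul_sum]
  exact Finset.sum_congr rfl fun i _ => by ring

lemma cellAvg_sub_pow (hh : h ≠ 0) (j : ℝ) (k : ℕ) :
    cellAvg (fun t => (t - x₀) ^ k) x₀ h j = cellMoment j k * h ^ k := by
  rw [cellAvg, intervalIntegral.integral_comp_sub_right (· ^ k), integral_pow, cellMoment]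
  simp only [add_sub_cancel_left, mul_pow, pow_succ]
  field_simp

lemma abs_cellAvg_le {f : ℝ → ℝ} {C : ℝ} (hh : 0 < h) {j : ℝ}
    (hf : ∀ t ∈ uIoc (x₀ + (j - 1 / 2) * h) (x₀ + (j + 1 / 2) * h), |f t| ≤ C) :
    |cellAvg f x₀ h j| ≤ C := by
  have hint := intervalIntegral.norm_integral_le_of_norm_le_const (f := f) hf
  rw [show x₀ + (j + 1 / 2) * h - (x₀ + (j - 1 / 2) * h) = h by ring, abs_of_pos hh] at hint
  rw [cellAvg, abs_mul, abs_of_pos (one_div_pos.2 hh)]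
  calc 1 / h * |∫ t in _.._, f t| ≤ 1 / h * (C * h) := by gcongr; exact hint
    _ = C := by field_simp

lemma abs_sub_le_of_mem_cell (hh : 0 < h) {j t : ℝ}
    (ht : t ∈ uIoc (x₀ + (j - 1 / 2) * h) (x₀ + (j + 1 / 2) * h)) :
    |t - x₀| ≤ (|j| + 1) * h := by
  rw [uIoc_of_le (by nlinarith)] at ht
  rw [abs_le]
  constructor <;> nlinarith [neg_abs_le j, le_abs_self j, ht.1, ht.2]

lemma isLittleO_cellAvg {g : ℝ → ℝ} {n : ℕ} (hg : g =o[𝓝 x₀] fun x => (x - x₀) ^ n) (j : ℝ) :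
    (fun h => cellAvg g x₀ h j) =o[𝓝[>] 0] fun h => h ^ n := by
  rw [isLittleO_iff]
  intro c hc
  have hj : 0 < |j| + 1 := by positivity
  obtain ⟨δ, hδ, hball⟩ :=
    Metric.eventually_nhds_iff.1 (hg.def (c := c / (|j| + 1) ^ n) (by positivity))
  filter_upwards [Ioo_mem_nhdsGT (div_pos hδ hj)] with h ⟨hh, hhδ⟩
  rw [norm_pow, Real.norm_eq_abs, Real.norm_eq_abs, abs_of_pos hh]
  refine abs_cellAvg_le hh fun t ht => ?_
  have hdist := abs_sub_le_of_mem_cell hh ht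
  have hlt : dist t x₀ < δ := by
    rw [Real.dist_eq]
    exact hdist.trans_lt (by rwa [lt_div_iff₀ hj, mul_comm] at hhδ)
  calc |g t| ≤ c / (|j| + 1) ^ n * |t - x₀| ^ n := by simpa using hball hlt
    _ ≤ c / (|j| + 1) ^ n * ((|j| + 1) * h) ^ n := by gcongr
    _ = c * h ^ n := by rw [mul_pow]; field_simp

end CellAverage

section Stencil

variable {v : ℝ → ℝ} (x₀ : ℝ) {n : ℕ}

lemma taylorWithinEval_univ_eq (v : ℝ → ℝ) (n : ℕ) :
    taylorWithinEval v n univ x₀ = fun t =>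
      ∑ k ∈ Finset.range (n + 1), iteratedDeriv k v x₀ / k.factorial * (t - x₀) ^ k := by
  funext t
  simp only [taylor_within_apply, iteratedDerivWithin_univ, smul_eq_mul]
  exact Finset.sum_congr rfl fun k _ => by ring

lemma cellAvg_sub_taylor_isLittleO (hv : ContDiff ℝ n v) (j : ℝ) :
    (fun h => cellAvg v x₀ h j - ∑ k ∈ Finset.range (n + 1),
        iteratedDeriv k v x₀ / k.factorial * cellMoment j k * h ^ k)
      =o[𝓝[>] 0] fun h => h ^ n := by
  have hT := taylorWithinEval_univ_eq x₀ v n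
  refine (isLittleO_cellAvg (taylor_isLittleO_univ (x₀ := x₀) hv) j).congr' ?_ EventuallyEq.rfl
  filter_upwards [self_mem_nhdsWithin] with h hh
  rw [cellAvg_sub hv.continuous (by rw [hT]; fun_prop), hT,
    cellAvg_finsetSum_mul _ _ fun k => by fun_prop]
  simp only [cellAvg_sub_pow (ne_of_gt hh), mul_assoc]

variable {ι : Type*} [Fintype ι] (w a : ι → ℝ)

lemma stencil_sub_taylor_isLittleO (hv : ContDiff ℝ n v) :
    (fun h => ∑ i, w i * cellAvg v x₀ h (a i) - ∑ k ∈ Finset.range (n + 1),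
        iteratedDeriv k v x₀ / k.factorial * (∑ i, w i * cellMoment (a i) k) * h ^ k)
      =o[𝓝[>] 0] fun h => h ^ n := by
  refine (IsLittleO.sum (s := Finset.univ) fun i _ =>
    (cellAvg_sub_taylor_isLittleO x₀ hv (a i)).const_mul_left (w i)).congr_left fun h => ?_
  simp only [Finset.sum_apply, mul_sub, Finset.sum_sub_distrib, Finset.mul_sum, Finset.sum_mul]
  congr 1
  rw [Finset.sum_comm]
  exact Finset.sum_congr rfl fun k _ => Finset.sum_congr rfl fun i _ => by ring

lemma stencil_isBigO (hv : ContDiff ℝ n v) (hw : ∀ k < n, ∑ i, w i * cellMoment (a i) k = 0) :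
    (fun h => ∑ i, w i * cellAvg v x₀ h (a i)) =O[𝓝[>] 0] fun h => h ^ n := by
  refine ((stencil_sub_taylor_isLittleO x₀ w a hv).isBigO.add (isBigO_const_mul_self
    (iteratedDeriv n v x₀ / n.factorial * ∑ i, w i * cellMoment (a i) n) _ _)).congr_left
    fun h => ?_
  rw [Finset.sum_range_succ, Finset.sum_eq_zero (s := Finset.range n) fun k hk => by
    rw [hw k (Finset.mem_range.1 hk), mul_zero, zero_mul]]
  ring

lemma stencil_sub_deriv_isLittleO (hv : ContDiff ℝ 1 v) (hw : ∑ i, w i = 0) :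
    (fun h => ∑ i, w i * cellAvg v x₀ h (a i) - (∑ i, w i * a i) * deriv v x₀ * h)
      =o[𝓝[>] 0] fun h => h := by
  refine (stencil_sub_taylor_isLittleO x₀ w a (n := 1) hv).congr (fun h => ?_) fun h => pow_one h
  simp only [Finset.sum_range_succ, Finset.sum_range_zero, cellMoment_zero, cellMoment_one,
    mul_one, hw, iteratedDeriv_zero, iteratedDeriv_one, Nat.factorial, pow_zero, pow_one]
  ring

lemma fiveCell_stencil_isBigO (hv : ContDiff ℝ n v) (w₀ w₁ w₂ w₃ w₄ : ℝ)
    (hw : ∀ k < n, w₀ * cellMoment (-2) k + w₁ * cellMoment (-1) k + w₂ * cellMoment 0 k +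
      w₃ * cellMoment 1 k + w₄ * cellMoment 2 k = 0) :
    (fun h => w₀ * cellAvg v x₀ h (-2) + w₁ * cellAvg v x₀ h (-1) + w₂ * cellAvg v x₀ h 0 +
        w₃ * cellAvg v x₀ h 1 + w₄ * cellAvg v x₀ h 2) =O[𝓝[>] 0] fun h => h ^ n := by
  simpa [Fin.sum_univ_five] using
    stencil_isBigO x₀ ![w₀, w₁, w₂, w₃, w₄] ![-2, -1, 0, 1, 2] hv (by simpa [Fin.sum_univ_five])

lemma fiveCell_stencil_sub_deriv_isLittleO (hv : ContDiff ℝ 1 v) (w₀ w₁ w₂ w₃ w₄ : ℝ)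
    (hw : w₀ + w₁ + w₂ + w₃ + w₄ = 0) :
    (fun h => w₀ * cellAvg v x₀ h (-2) + w₁ * cellAvg v x₀ h (-1) + w₂ * cellAvg v x₀ h 0 +
        w₃ * cellAvg v x₀ h 1 + w₄ * cellAvg v x₀ h 2 -
        (-2 * w₀ - w₁ + w₃ + 2 * w₄) * deriv v x₀ * h) =o[𝓝[>] 0] fun h => h := by
  refine (stencil_sub_deriv_isLittleO x₀ ![w₀, w₁, w₂, w₃, w₄] ![-2, -1, 0, 1, 2] hv
    (by simpa [Fin.sum_univ_five])).congr_left fun h => ?_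
  simp only [Fin.sum_univ_five, Matrix.cons_val_zero, Matrix.cons_val_one, Matrix.cons_val]
  ring

end Stencil

noncomputable def jiangShu (S D : ℝ) : ℝ := 13 / 12 * S ^ 2 + 1 / 4 * D ^ 2

lemma jiangShu_nonneg (S D : ℝ) : 0 ≤ jiangShu S D := by
  unfold jiangShu; positivity

lemma sq_isBigO_jiangShu {l : Filter ℝ} {S D : ℝ → ℝ} {c : ℝ} (hc : c ≠ 0)
    (hD : (fun h => D h - c * h) =o[l] fun h => h) :
    (fun h => h ^ 2) =O[l] fun h => jiangShu (S h) (D h) := by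
  have hself := isBigO_self_const_mul hc (fun h => h) l
  have hlin : (fun h => h) =O[l] D :=
    hself.trans ((hD.trans_isBigO hself).right_isBigO_add.congr_right fun h => by ring)
  have hsq : (fun h => D h ^ 2) =O[l] fun h => jiangShu (S h) (D h) :=
    IsBigO.of_bound 4 (Eventually.of_forall fun h => by
      rw [Real.norm_eq_abs, Real.norm_eq_abs, abs_of_nonneg (sq_nonneg _),
        abs_of_nonneg (jiangShu_nonneg _ _), jiangShu]
      nlinarith [sq_nonneg (S h)])
  exact (hlin.pow 2).trans hsq

section WENO

variable {v : ℝ → ℝ} {x₀ : ℝ}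

noncomputable def secondDiff (v : ℝ → ℝ) (x₀ h : ℝ) : Fin 3 → ℝ :=
  ![cellAvg v x₀ h (-2) - 2 * cellAvg v x₀ h (-1) + cellAvg v x₀ h 0,
    cellAvg v x₀ h (-1) - 2 * cellAvg v x₀ h 0 + cellAvg v x₀ h 1,
    cellAvg v x₀ h 0 - 2 * cellAvg v x₀ h 1 + cellAvg v x₀ h 2]

noncomputable def firstDiff (v : ℝ → ℝ) (x₀ h : ℝ) : Fin 3 → ℝ :=
  ![cellAvg v x₀ h (-2) - 4 * cellAvg v x₀ h (-1) + 3 * cellAvg v x₀ h 0,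
    cellAvg v x₀ h (-1) - cellAvg v x₀ h 1,
    3 * cellAvg v x₀ h 0 - 4 * cellAvg v x₀ h 1 + cellAvg v x₀ h 2]

lemma betaV_eq_jiangShu (h : ℝ) (s : Fin 3) :
    betaV v x₀ h s = jiangShu (secondDiff v x₀ h s) (firstDiff v x₀ h s) := by
  fin_cases s <;> rfl

lemma firstDiff_sub_isLittleO (hv : ContDiff ℝ 1 v) (s : Fin 3) :
    (fun h => firstDiff v x₀ h s - ![2, -2, -2] s * deriv v x₀ * h) =o[𝓝[>] 0] fun h => h := by
  match s with
  | 0 =>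
    refine (fiveCell_stencil_sub_deriv_isLittleO x₀ hv 1 (-4) 3 0 0 (by norm_num)).congr_left
      fun h => ?_
    simp only [firstDiff, Matrix.cons_val_zero]
    ring
  | 1 =>
    refine (fiveCell_stencil_sub_deriv_isLittleO x₀ hv 0 1 0 (-1) 0 (by norm_num)).congr_left
      fun h => ?_
    simp only [firstDiff, Matrix.cons_val_zero, Matrix.cons_val_one]
    ring
  | 2 =>
    refine (fiveCell_stencil_sub_deriv_isLittleO x₀ hv 0 0 3 (-4) 1 (by norm_num)).congr_left
      fun h => ?_
    simp only [firstDiff, Matrix.cons_val]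
    ring

lemma sq_isBigO_betaV (hv : ContDiff ℝ 1 v) (hx : deriv v x₀ ≠ 0) (s : Fin 3) :
    (fun h => h ^ 2) =O[𝓝[>] 0] fun h => betaV v x₀ h s := by
  simp only [betaV_eq_jiangShu]
  exact sq_isBigO_jiangShu (by fin_cases s <;> simp [hx]) (firstDiff_sub_isLittleO hv s)

lemma eventually_betaV_pos (hv : ContDiff ℝ 1 v) (hx : deriv v x₀ ≠ 0) :
    ∀ᶠ h in 𝓝[>] 0, ∀ s, 0 < betaV v x₀ h s := by
  refine eventually_all.2 fun s => ?_
  filter_upwards [(sq_isBigO_betaV hv hx s).eq_zero_imp, self_mem_nhdsWithin] with h himp hh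
  rw [betaV_eq_jiangShu] at himp ⊢
  exact (jiangShu_nonneg _ _).lt_of_ne fun h0 => (pow_pos hh 2).ne' (himp h0.symm)

lemma beta0_sub_beta2 (h : ℝ) :
    beta0 v x₀ h - beta2 v x₀ h =
      13 / 12 * (secondDiff v x₀ h 0 - secondDiff v x₀ h 2) *
          (secondDiff v x₀ h 0 + secondDiff v x₀ h 2) +
        1 / 4 * (firstDiff v x₀ h 0 - firstDiff v x₀ h 2) *
          (firstDiff v x₀ h 0 + firstDiff v x₀ h 2) := by
  simp only [beta0, beta2, secondDiff, firstDiff, Matrix.cons_val_zero, Matrix.cons_val]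
  ring

lemma tau5_isBigO (hv : ContDiff ℝ 4 v) :
    (fun h => tau5 v x₀ h) =O[𝓝[>] 0] fun h => h ^ 5 := by
  have hSdiff := fiveCell_stencil_isBigO x₀ (n := 3) (hv.of_le (by norm_num)) 1 (-2) 0 2 (-1)
    (by intro k hk; interval_cases k <;> norm_num [cellMoment])
  have hSsum := fiveCell_stencil_isBigO x₀ (n := 2) (hv.of_le (by norm_num)) 1 (-2) 2 (-2) 1
    (by intro k hk; interval_cases k <;> norm_num [cellMoment])
  have hDdiff := fiveCell_stencil_isBigO x₀ (n := 1) (hv.of_le (by norm_num)) 1 (-4) 0 4 (-1)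
    (by intro k hk; interval_cases k; norm_num [cellMoment])
  have hDsum := fiveCell_stencil_isBigO x₀ hv 1 (-4) 6 (-4) 1
    (by intro k hk; interval_cases k <;> norm_num [cellMoment])
  have hS : _ =O[𝓝[>] 0] fun h : ℝ => h ^ 5 := (hSdiff.mul hSsum).congr_right fun h => by ring
  have hD : _ =O[𝓝[>] 0] fun h : ℝ => h ^ 5 := (hDdiff.mul hDsum).congr_right fun h => by ring
  refine isBigO_abs_left.2 (((hS.const_mul_left (13 / 12)).add
    (hD.const_mul_left (1 / 4))).congr_left fun h => ?_)
  rw [beta0_sub_beta2]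
  simp only [secondDiff, firstDiff, Matrix.cons_val_zero, Matrix.cons_val]
  ring

lemma tau5_div_betaV_isBigO (hv : ContDiff ℝ 4 v) (hx : deriv v x₀ ≠ 0) (s : Fin 3) :
    (fun h => tau5 v x₀ h / betaV v x₀ h s) =O[𝓝[>] 0] fun h => h ^ 3 := by
  have hv1 : ContDiff ℝ 1 v := hv.of_le (by norm_num)
  have hinv := (sq_isBigO_betaV hv1 hx s).inv_rev <| by
    filter_upwards [self_mem_nhdsWithin] with h (hh : 0 < h) h0
    exact absurd h0 (pow_pos hh 2).ne'
  refine ((tau5_isBigO hv).mul hinv).congr' (Eventually.of_forall fun h => div_eq_mul_inv _ _) ?_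
  filter_upwards [self_mem_nhdsWithin] with h (hh : 0 < h)
  field_simp

end WENO

lemma abs_normalizedWeight_sub_le {ι : Type*} [Fintype ι] (d u : ι → ℝ) (hd : ∀ i, 0 ≤ d i)
    (hd1 : ∑ i, d i = 1) (hu : ∀ i, 0 ≤ u i) (s : ι) :
    |d s * (1 + u s) / ∑ r, d r * (1 + u r) - d s| ≤ ∑ r, u r := by
  set w := ∑ r, d r * u r
  have hsum : ∑ r, d r * (1 + u r) = 1 + w := by
    simp only [w, mul_add, mul_one, Finset.sum_add_distrib, hd1]
  have hw : 0 ≤ w := Finset.sum_nonneg fun r _ => mul_nonneg (hd r) (hu r)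
  have hd_le : ∀ r, d r ≤ 1 := fun r =>
    hd1 ▸ Finset.single_le_sum (fun i _ => hd i) (Finset.mem_univ r)
  have hwu : w ≤ ∑ r, u r := Finset.sum_le_sum fun r _ => by nlinarith [hd_le r, hu r]
  have hus : u s ≤ ∑ r, u r := Finset.single_le_sum (fun i _ => hu i) (Finset.mem_univ s)
  have hdiff : |u s - w| ≤ ∑ r, u r :=
    abs_sub_le_iff.2 ⟨by linarith [hu s], by linarith [hu s]⟩
  rw [hsum, show d s * (1 + u s) / (1 + w) - d s = d s * (u s - w) / (1 + w) by field_simp; ring,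
    abs_div, abs_mul, abs_of_nonneg (hd s), abs_of_pos (show 0 < 1 + w by linarith),
    div_le_iff₀ (by linarith)]
  nlinarith [mul_le_mul (hd_le s) hdiff (abs_nonneg _) zero_le_one, hus, hu s]

/-- At a non-critical point (`v′(x₀) ≠ 0`) of a `C⁶` function, the smoothness indicators are
eventually positive and the WENO-Z nonlinear weights (with `ε = 0`) satisfy
`ω_s − d_s = O(h³)` as `h → 0⁺`. -/
theorem stmt16 (v : ℝ → ℝ) (hv : ContDiff ℝ 6 v) (x₀ : ℝ) (hx : deriv v x₀ ≠ 0) :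
    ∃ h₀ : ℝ, 0 < h₀ ∧
      (∀ h : ℝ, 0 < h → h < h₀ → ∀ s : Fin 3, 0 < betaV v x₀ h s) ∧
      (∀ s : Fin 3,
        (fun h : ℝ =>
            (dLin s * (1 + tau5 v x₀ h / betaV v x₀ h s))
              / (∑ r : Fin 3, dLin r * (1 + tau5 v x₀ h / betaV v x₀ h r)) - dLin s)
          =O[𝓝[>] (0 : ℝ)] (fun h => h ^ 3)) := by
  have hpos := eventually_betaV_pos (hv.of_le (by norm_num)) hx
  obtain ⟨h₀, hh₀, hsub⟩ := mem_nhdsGT_iff_exists_Ioo_subset.1 hpos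
  refine ⟨h₀, hh₀, fun h hh hlt => hsub ⟨hh, hlt⟩, fun s => ?_⟩
  have hu := IsBigO.sum (s := Finset.univ) fun r _ =>
    tau5_div_betaV_isBigO (hv.of_le (by norm_num)) hx r
  refine (IsBigO.of_bound 1 ?_).trans hu
  filter_upwards [hpos] with h hβ
  rw [Finset.sum_apply, one_mul, Real.norm_eq_abs, Real.norm_eq_abs]
  refine (abs_normalizedWeight_sub_le dLin (fun r => tau5 v x₀ h / betaV v x₀ h r) (fun r => ?_)
    ?_ (fun r => div_nonneg (abs_nonneg _) (hβ r).le) s).trans (le_abs_self _)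
  · fin_cases r <;> norm_num [dLin]
  · simp only [dLin, Fin.sum_univ_three, Matrix.cons_val_zero, Matrix.cons_val_one, Matrix.cons_val]
    norm_num
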